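/- Let p ∈ (1,2) and a > 0, and let ψ : [0,1) → [0,∞) be continuously differentiable with ψ(0) = 0, ψ(y) > 0 for y ∈ (0,1), satisfying ψ'(y) + (p/(p-1)) ψ(y)^{(p-1)/p} = (p a^{2-p}/(p-1))(1-y) for all y ∈ (0,1). If ψ(y) → 0 as y → 1, then, with κ := (p-1)^{-p}: (i) 0 ≤ ψ(y) ≤ κ(1-y)^p for all y ∈ (0,1); (ii) the function y ↦ ψ(y)(1-y)^{-p} has a limit L as y → 1, and L ∈ {0, κ}. -/

import Mathlib

/-!
With `v = ψ ^ (1/p)`, `β = (p-1)⁻¹` and `K = a ^ (2-p) / (p-1) > 0` the equation reads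
`v' = K (1-y) v ^ (1-p) - β`, so `v - β (1-y)` is increasing; as it tends to `0` at `1`, it is
nonpositive, which is (i). The rescaled `w = v / (1-y) ∈ (0, β]` solves
`(1-y) w' = w - β + g w ^ (1-p)` with `g = K (1-y) ^ (2-p)` decreasing to `0`. Where
`Φ = w - β + g w ^ (1-p)` vanishes, `Φ' = g' w ^ (1-p) < 0`, so `w` is monotone near `1` and has
a limit `M ∈ [0, β]`. If `0 < M < β`, then `(1-y) w' → M - β < 0` would force `w → -∞` at
the rate of `log (1-y)`; hence `M ∈ {0, β}`, and `ψ (1-y) ^ (-p) = w ^ p → M ^ p`.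
-/

open Set Filter Topology

/-- `ψ : [0,1) → [0,∞)` is continuously differentiable (with derivative `ψd`), `ψ(0) = 0`,
and `ψ' + (p/(p-1)) ψ^{(p-1)/p} = (p a^{2-p}/(p-1))(1-y)` holds on `(0,1)`. -/
def PsiSol (p a : ℝ) (ψ ψd : ℝ → ℝ) : Prop :=
  (∀ y ∈ Set.Ico (0:ℝ) 1, HasDerivWithinAt ψ (ψd y) (Set.Ico 0 1) y) ∧
  ContinuousOn ψd (Set.Ico 0 1) ∧
  (∀ y ∈ Set.Ico (0:ℝ) 1, 0 ≤ ψ y) ∧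
  ψ 0 = 0 ∧
  (∀ y ∈ Set.Ioo (0:ℝ) 1,
    ψd y + (p/(p-1)) * ψ y ^ ((p-1)/p) = (p * a ^ (2-p) / (p-1)) * (1-y))

theorem monotoneOn_Ioo_of_hasDerivAt_nonneg {f f' : ℝ → ℝ} {a b : ℝ}
    (hf : ∀ x ∈ Ioo a b, HasDerivAt f (f' x) x) (hf' : ∀ x ∈ Ioo a b, 0 ≤ f' x) :
    MonotoneOn f (Ioo a b) :=
  monotoneOn_of_hasDerivWithinAt_nonneg (convex_Ioo a b)
    (fun x hx => (hf x hx).continuousAt.continuousWithinAt)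
    (fun x hx => (hf x (interior_subset hx)).hasDerivWithinAt)
    (fun x hx => hf' x (interior_subset hx))

theorem antitoneOn_Ioo_of_hasDerivAt_nonpos {f f' : ℝ → ℝ} {a b : ℝ}
    (hf : ∀ x ∈ Ioo a b, HasDerivAt f (f' x) x) (hf' : ∀ x ∈ Ioo a b, f' x ≤ 0) :
    AntitoneOn f (Ioo a b) :=
  antitoneOn_of_hasDerivWithinAt_nonpos (convex_Ioo a b)
    (fun x hx => (hf x hx).continuousAt.continuousWithinAt)
    (fun x hx => (hf x (interior_subset hx)).hasDerivWithinAt)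
    (fun x hx => hf' x (interior_subset hx))

theorem tendsto_one_sub_nhdsLT_one : Tendsto (fun y : ℝ => 1 - y) (𝓝[<] 1) (𝓝[>] 0) := by
  refine tendsto_nhdsWithin_iff.2 ⟨?_, ?_⟩
  · have : Tendsto (fun y : ℝ => 1 - y) (𝓝 1) (𝓝 (1 - 1)) := tendsto_const_nhds.sub tendsto_id
    simpa using this.mono_left nhdsWithin_le_nhds
  · filter_upwards [self_mem_nhdsWithin] with y (hy : y < 1)
    exact sub_pos.2 hy

theorem le_mul_one_sub_of_tendsto_zero {v v' : ℝ → ℝ} {β : ℝ}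
    (hv : ∀ y ∈ Ioo (0:ℝ) 1, HasDerivAt v (v' y) y) (hv' : ∀ y ∈ Ioo (0:ℝ) 1, -β ≤ v' y)
    (hlim : Tendsto v (𝓝[<] 1) (𝓝 0)) {y : ℝ} (hy : y ∈ Ioo (0:ℝ) 1) :
    v y ≤ β * (1 - y) := by
  have hmono : MonotoneOn (fun z => v z - β * (1 - z)) (Ioo 0 1) :=
    monotoneOn_Ioo_of_hasDerivAt_nonneg
      (fun z hz => ((hv z hz).fun_sub (((hasDerivAt_id' z).const_sub 1).const_mul β)))
      (fun z hz => by linarith [hv' z hz])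
  have hlim' : Tendsto (fun z => v z - β * (1 - z)) (𝓝[<] 1) (𝓝 0) := by
    simpa using hlim.sub ((tendsto_one_sub_nhdsLT_one.mono_right nhdsWithin_le_nhds).const_mul β)
  have hy' : v y - β * (1 - y) ≤ 0 := ge_of_tendsto hlim' <| by
    filter_upwards [Ioo_mem_nhdsLT hy.2] with z hz
    exact hmono hy ⟨hy.1.trans hz.1, hz.2⟩ hz.1.le
  linarith

theorem tendsto_atBot_of_eventually_mul_one_sub_le {f f' : ℝ → ℝ} {δ : ℝ} (hδ : 0 < δ)
    (hf : ∀ᶠ y in 𝓝[<] (1:ℝ), HasDerivAt f (f' y) y ∧ (1 - y) * f' y ≤ -δ) :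
    Tendsto f (𝓝[<] 1) atBot := by
  obtain ⟨Y, hY, hsub⟩ := mem_nhdsLT_iff_exists_Ioo_subset.1 hf
  -- `f - δ log (1 - y)` is antitone near `1`, while `δ log (1 - y) → -∞`
  set φ : ℝ → ℝ := fun y => f y - δ * Real.log (1 - y)
  have hanti : AntitoneOn φ (Ioo Y 1) := by
    refine antitoneOn_Ioo_of_hasDerivAt_nonpos (f' := fun y => ((1 - y) * f' y + δ) / (1 - y))
      (fun y hy => ?_) (fun y hy => ?_)
    · have h1y : 1 - y ≠ 0 := (sub_pos.2 hy.2).ne'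
      refine ((hsub hy).1.fun_sub
        ((((hasDerivAt_id' y).const_sub 1).log h1y).const_mul δ)).congr_deriv ?_
      field_simp
      ring
    · exact div_nonpos_of_nonpos_of_nonneg (by linarith [(hsub hy).2]) (sub_pos.2 hy.2).le
  obtain ⟨z, hz⟩ : (Ioo Y 1).Nonempty := nonempty_Ioo.2 hY
  have hlog : Tendsto (fun y => δ * Real.log (1 - y) + φ z) (𝓝[<] 1) atBot :=
    tendsto_atBot_add_const_right _ _
      ((Real.tendsto_log_nhdsGT_zero.comp tendsto_one_sub_nhdsLT_one).const_mul_atBot hδ)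
  refine tendsto_atBot_mono' _ ?_ hlog
  filter_upwards [Ioo_mem_nhdsLT hz.2] with y hy
  have := hanti hz ⟨hz.1.trans hy.1, hy.2⟩ hy.1.le
  simp only [φ] at this ⊢
  linarith

section RescaledEquation

variable {β r : ℝ} {g g' w : ℝ → ℝ}

theorem monotoneOn_or_exists_antitoneOn
    (hw : ∀ y ∈ Ioo (0:ℝ) 1, HasDerivAt w ((w y - β + g y * w y ^ r) / (1 - y)) y)
    (hg : ∀ y ∈ Ioo (0:ℝ) 1, HasDerivAt g (g' y) y) (hg' : ∀ y ∈ Ioo (0:ℝ) 1, g' y < 0)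
    (hw0 : ∀ y ∈ Ioo (0:ℝ) 1, 0 < w y) :
    MonotoneOn w (Ioo 0 1) ∨ ∃ Y ∈ Ioo (0:ℝ) 1, AntitoneOn w (Ioo Y 1) := by
  -- where `Φ` vanishes so does `w'`, whence `Φ' = g' w ^ r < 0`: once `Φ ≤ 0`, it stays so
  set Φ : ℝ → ℝ := fun y => w y - β + g y * w y ^ r
  have hΦ : ∀ y ∈ Ioo (0:ℝ) 1, HasDerivAt Φ (Φ y / (1 - y) + (g' y * w y ^ r
      + g y * (Φ y / (1 - y) * r * w y ^ (r - 1)))) y := fun y hy =>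
    ((hw y hy).sub_const β).add ((hg y hy).mul ((hw y hy).rpow_const (Or.inl (hw0 y hy).ne')))
  by_cases h : ∃ Y ∈ Ioo (0:ℝ) 1, Φ Y ≤ 0
  · obtain ⟨Y, hY, hΦY⟩ := h
    have hΦneg : ∀ y ∈ Ioo Y 1, Φ y ≤ 0 := fun y hy => by
      have hsub : Icc Y y ⊆ Ioo 0 1 := Icc_subset_Ioo hY.1 hy.2
      refine image_le_of_deriv_right_lt_deriv_boundary (B := fun _ => 0)
        (fun z hz => (hΦ z (hsub hz)).continuousAt.continuousWithinAt)
        (fun z hz => (hΦ z (hsub (Ico_subset_Icc_self hz))).hasDerivWithinAt)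
        hΦY (fun _ => hasDerivAt_const _ _) (fun z hz hΦz => ?_) ⟨hy.1.le, le_rfl⟩
      rw [hΦz, zero_div, zero_mul, zero_mul, mul_zero, zero_add, add_zero]
      exact mul_neg_of_neg_of_pos (hg' z (hsub (Ico_subset_Icc_self hz)))
        (Real.rpow_pos_of_pos (hw0 z (hsub (Ico_subset_Icc_self hz))) r)
    have hsub : Ioo Y 1 ⊆ Ioo 0 1 := Ioo_subset_Ioo_left hY.1.le
    exact Or.inr ⟨Y, hY, antitoneOn_Ioo_of_hasDerivAt_nonpos (fun y hy => hw y (hsub hy))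
      (fun y hy => div_nonpos_of_nonpos_of_nonneg (hΦneg y hy) (sub_pos.2 hy.2).le)⟩
  · push Not at h
    exact Or.inl (monotoneOn_Ioo_of_hasDerivAt_nonneg hw
      (fun y hy => div_nonneg (h y hy).le (sub_pos.2 hy.2).le))

theorem exists_tendsto_eq_zero_or_eq
    (hw : ∀ y ∈ Ioo (0:ℝ) 1, HasDerivAt w ((w y - β + g y * w y ^ r) / (1 - y)) y)
    (hg : ∀ y ∈ Ioo (0:ℝ) 1, HasDerivAt g (g' y) y) (hg' : ∀ y ∈ Ioo (0:ℝ) 1, g' y < 0)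
    (hg0 : Tendsto g (𝓝[<] 1) (𝓝 0))
    (hw0 : ∀ y ∈ Ioo (0:ℝ) 1, 0 < w y) (hwβ : ∀ y ∈ Ioo (0:ℝ) 1, w y ≤ β) :
    ∃ M, Tendsto w (𝓝[<] 1) (𝓝 M) ∧ (M = 0 ∨ M = β) := by
  obtain ⟨M, hM⟩ : ∃ M, Tendsto w (𝓝[<] 1) (𝓝 M) := by
    rcases monotoneOn_or_exists_antitoneOn hw hg hg' hw0 with hmono | ⟨Y, hY, hanti⟩
    · exact ⟨_, hmono.tendsto_nhdsWithin_Ioo_left (nonempty_Ioo.2 one_pos)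
        ⟨β, forall_mem_image.2 hwβ⟩⟩
    · exact ⟨_, hanti.tendsto_nhdsWithin_Ioo_left (nonempty_Ioo.2 hY.2)
        ⟨0, forall_mem_image.2 fun y hy => (hw0 y ⟨hY.1.trans hy.1, hy.2⟩).le⟩⟩
  have hIoo : Ioo (0:ℝ) 1 ∈ 𝓝[<] 1 := Ioo_mem_nhdsLT one_pos
  have hM0 : 0 ≤ M := ge_of_tendsto hM (eventually_of_mem hIoo fun y hy => (hw0 y hy).le)
  have hMβ : M ≤ β := le_of_tendsto hM (eventually_of_mem hIoo hwβ)
  refine ⟨M, hM, ?_⟩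
  by_contra! hne
  have hM0' : 0 < M := lt_of_le_of_ne hM0 (Ne.symm hne.1)
  have hMβ' : M < β := lt_of_le_of_ne hMβ hne.2
  have hΦ : Tendsto (fun y => w y - β + g y * w y ^ r) (𝓝[<] 1) (𝓝 (M - β)) := by
    simpa using (hM.sub_const β).add (hg0.mul (hM.rpow_const (Or.inl hM0'.ne')))
  have hev : ∀ᶠ y in 𝓝[<] (1:ℝ), HasDerivAt w ((w y - β + g y * w y ^ r) / (1 - y)) y ∧
      (1 - y) * ((w y - β + g y * w y ^ r) / (1 - y)) ≤ -((β - M) / 2) := by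
    filter_upwards [hIoo, hΦ.eventually (eventually_le_nhds (by linarith : M - β < (M - β) / 2))]
      with y hy hΦy
    refine ⟨hw y hy, ?_⟩
    rw [mul_div_cancel₀ _ (sub_pos.2 hy.2).ne']
    linarith
  exact not_tendsto_atBot_of_tendsto_nhds hM
    (tendsto_atBot_of_eventually_mul_one_sub_le (by linarith) hev)

end RescaledEquation

theorem HasDerivAt.div_one_sub {v : ℝ → ℝ} {K r β y : ℝ}
    (hv : HasDerivAt v (K * (1 - y) * v y ^ r - β) y) (hv0 : 0 ≤ v y) (hy : y < 1) :
    HasDerivAt (fun z => v z / (1 - z))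
      ((v y / (1 - y) - β + K * (1 - y) ^ (r + 1) * (v y / (1 - y)) ^ r) / (1 - y)) y := by
  have h1y : 0 < 1 - y := sub_pos.2 hy
  refine (hv.fun_div ((hasDerivAt_id' y).const_sub 1) h1y.ne').congr_deriv ?_
  rw [Real.div_rpow hv0 h1y.le, Real.rpow_add_one h1y.ne']
  have : 0 < (1 - y) ^ r := Real.rpow_pos_of_pos h1y r
  field_simp
  ring

theorem hasDerivAt_const_mul_one_sub_rpow (K s : ℝ) {y : ℝ} (hy : y < 1) :
    HasDerivAt (fun z => K * (1 - z) ^ s) (-(K * s * (1 - y) ^ (s - 1))) y :=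
  ((((hasDerivAt_id' y).const_sub 1).rpow_const (Or.inl (sub_pos.2 hy).ne')).const_mul K
    ).congr_deriv (by ring)

namespace PsiSol

variable {p a : ℝ} {ψ ψd : ℝ → ℝ}

theorem hasDerivAt (h : PsiSol p a ψ ψd) {y : ℝ} (hy : y ∈ Ioo (0:ℝ) 1) :
    HasDerivAt ψ (ψd y) y :=
  (h.1 y (Ioo_subset_Ico_self hy)).hasDerivAt
    (mem_of_superset (isOpen_Ioo.mem_nhds hy) Ioo_subset_Ico_self)

theorem hasDerivAt_rpow_inv (h : PsiSol p a ψ ψd) (hp : 1 < p) {y : ℝ} (hy : y ∈ Ioo (0:ℝ) 1)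
    (hψy : 0 < ψ y) :
    HasDerivAt (fun z => ψ z ^ p⁻¹)
      (a ^ (2 - p) / (p - 1) * (1 - y) * (ψ y ^ p⁻¹) ^ (1 - p) - (p - 1)⁻¹) y := by
  refine ((h.hasDerivAt hy).rpow_const (Or.inl hψy.ne')).congr_deriv ?_
  have hp0 : p ≠ 0 := by positivity
  have hp1 : p - 1 ≠ 0 := (sub_pos.2 hp).ne'
  have hpow : (ψ y ^ p⁻¹) ^ (1 - p) = ψ y ^ ((1 - p) / p) := by
    rw [← Real.rpow_mul hψy.le]
    congr 1
    field_simp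
  have hinv : ψ y ^ ((1 - p) / p) * ψ y ^ ((p - 1) / p) = 1 := by
    rw [← Real.rpow_add hψy]
    convert Real.rpow_zero (ψ y) using 2
    field_simp
    ring
  rw [hpow, eq_sub_of_add_eq (h.2.2.2.2 y hy)]
  field_simp
  linear_combination -hinv

theorem rpow_inv_le (h : PsiSol p a ψ ψd) (hp : 1 < p) (ha : 0 ≤ a)
    (hpos : ∀ y ∈ Ioo (0:ℝ) 1, 0 < ψ y) (hlim : Tendsto ψ (𝓝[<] 1) (𝓝 0))
    {y : ℝ} (hy : y ∈ Ioo (0:ℝ) 1) : ψ y ^ p⁻¹ ≤ (p - 1)⁻¹ * (1 - y) := by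
  have hp0 : 0 < p := by linarith
  refine le_mul_one_sub_of_tendsto_zero (fun z hz => h.hasDerivAt_rpow_inv hp hz (hpos z hz))
    (fun z hz => ?_) ?_ hy
  · have : 0 ≤ a ^ (2 - p) / (p - 1) * (1 - z) * (ψ z ^ p⁻¹) ^ (1 - p) :=
      mul_nonneg (mul_nonneg (div_nonneg (Real.rpow_nonneg ha _) (sub_pos.2 hp).le)
        (sub_pos.2 hz.2).le) (Real.rpow_nonneg (Real.rpow_nonneg (hpos z hz).le _) _)
    linarith
  · simpa [Real.zero_rpow (inv_ne_zero hp0.ne')] using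
      hlim.rpow_const (Or.inr (inv_nonneg.2 hp0.le))

theorem exists_tendsto_rescaled (h : PsiSol p a ψ ψd) (hp : p ∈ Ioo (1:ℝ) 2) (ha : 0 < a)
    (hpos : ∀ y ∈ Ioo (0:ℝ) 1, 0 < ψ y) (hlim : Tendsto ψ (𝓝[<] 1) (𝓝 0)) :
    ∃ M, Tendsto (fun y => ψ y ^ p⁻¹ / (1 - y)) (𝓝[<] 1) (𝓝 M) ∧ (M = 0 ∨ M = (p - 1)⁻¹) := by
  have hK : 0 < a ^ (2 - p) / (p - 1) := div_pos (Real.rpow_pos_of_pos ha _) (sub_pos.2 hp.1)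
  have hs : 0 < 1 - p + 1 := by linarith [hp.2]
  refine exists_tendsto_eq_zero_or_eq
    (g := fun y => a ^ (2 - p) / (p - 1) * (1 - y) ^ (1 - p + 1))
    (fun y hy => (h.hasDerivAt_rpow_inv hp.1 hy (hpos y hy)).div_one_sub
      (Real.rpow_nonneg (hpos y hy).le _) hy.2)
    (fun y hy => hasDerivAt_const_mul_one_sub_rpow _ _ hy.2)
    (fun y hy => neg_neg_of_pos (by have := sub_pos.2 hy.2; positivity)) ?_
    (fun y hy => div_pos (Real.rpow_pos_of_pos (hpos y hy) _) (sub_pos.2 hy.2))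
    (fun y hy => (div_le_iff₀ (sub_pos.2 hy.2)).2 (h.rpow_inv_le hp.1 ha.le hpos hlim hy))
  simpa [Real.zero_rpow hs.ne'] using
    ((tendsto_one_sub_nhdsLT_one.mono_right nhdsWithin_le_nhds).rpow_const
      (Or.inr hs.le)).const_mul (a ^ (2 - p) / (p - 1))

end PsiSol

/-- If moreover `ψ > 0` on `(0,1)` and `ψ(y) → 0` as `y → 1`, then, with
`κ := (p-1)^{-p}`: (i) `0 ≤ ψ(y) ≤ κ(1-y)^p` on `(0,1)`; (ii) `y ↦ ψ(y)(1-y)^{-p}` has a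
limit `L` as `y → 1` and `L ∈ {0, κ}`. -/
theorem stmt8 (p a : ℝ) (hp : p ∈ Set.Ioo (1:ℝ) 2) (ha : 0 < a)
    (ψ ψd : ℝ → ℝ) (hψ : PsiSol p a ψ ψd)
    (hpos : ∀ y ∈ Set.Ioo (0:ℝ) 1, 0 < ψ y)
    (hlim : Tendsto ψ (𝓝[<] (1:ℝ)) (𝓝 0)) :
    (∀ y ∈ Set.Ioo (0:ℝ) 1, 0 ≤ ψ y ∧ ψ y ≤ (p-1) ^ (-p) * (1-y) ^ p) ∧
    (∃ L : ℝ, Tendsto (fun y => ψ y * (1-y) ^ (-p)) (𝓝[<] (1:ℝ)) (𝓝 L) ∧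
      (L = 0 ∨ L = (p-1) ^ (-p))) := by
  have hp0 : 0 < p := by linarith [hp.1]
  have hp1 : 0 < p - 1 := sub_pos.2 hp.1
  have hκ : (p - 1) ^ (-p) = (p - 1)⁻¹ ^ p := by
    rw [Real.rpow_neg hp1.le, Real.inv_rpow hp1.le]
  refine ⟨fun y hy => ⟨(hpos y hy).le, ?_⟩, ?_⟩
  · have h1y : 0 < 1 - y := sub_pos.2 hy.2
    calc ψ y = (ψ y ^ p⁻¹) ^ p := (Real.rpow_inv_rpow (hpos y hy).le hp0.ne').symm
      _ ≤ ((p - 1)⁻¹ * (1 - y)) ^ p := Real.rpow_le_rpow (Real.rpow_nonneg (hpos y hy).le _)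
          (hψ.rpow_inv_le hp.1 ha.le hpos hlim hy) hp0.le
      _ = (p - 1) ^ (-p) * (1 - y) ^ p := by rw [Real.mul_rpow (by positivity) h1y.le, hκ]
  · obtain ⟨M, hM, hM'⟩ := hψ.exists_tendsto_rescaled hp ha hpos hlim
    refine ⟨M ^ p, (hM.rpow_const (Or.inr hp0.le)).congr' ?_, ?_⟩
    · filter_upwards [Ioo_mem_nhdsLT one_pos] with y hy
      rw [Real.div_rpow (Real.rpow_nonneg (hpos y hy).le _) (sub_pos.2 hy.2).le,
        Real.rpow_inv_rpow (hpos y hy).le hp0.ne', Real.rpow_neg (sub_pos.2 hy.2).le,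
        div_eq_mul_inv]
    · rcases hM' with rfl | rfl
      · exact Or.inl (Real.zero_rpow hp0.ne')
      · exact Or.inr hκ.symm
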